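/- arXiv:1903.08379 — 2 statements merged into one kernel-verified Lean document; each statement's English description precedes it below -/
import Mathlib

section
/- For all m ≥ 1 and all n ≥ k ≥ 1, the higher order Stirling numbers satisfy S^(m)(n,k) = Σ_{s=k−1}^{n−1} C(n−1, s) · B_{n−s}^(m−1) · S^(m)(s, k−1), where by convention S^(m)(0,0) = 1 and B_j^(0) = 1 for j ≥ 1, and C(n−1,s) is a binomial coefficient. -/
/-- `m`-th order ("hyper") partitions of a finite set `s`:
a chain `(P₁, …, P_m)` where `P₁` is a partition of `s` and each `P_{j+1}`
is a partition of the set of blocks of `P_j`. For `m = 0` it is `s` itself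
(a single trivial object). -/
def HyperPartition : (m : ℕ) → {α : Type} → [DecidableEq α] → Finset α → Type
  | 0, _, _, _ => PUnit
  | m + 1, _, _, s => (P : Finpartition s) × HyperPartition m P.parts

/-- The number of blocks of the outermost partition of a hyper partition
(for `m = 0`, by convention, the cardinality of the underlying set). -/
def HyperPartition.outerBlocks :
    (m : ℕ) → {α : Type} → [DecidableEq α] → {s : Finset α} →
      HyperPartition m s → ℕ
  | 0, _, _, s, _ => s.card
  | 1, _, _, _, p => p.1.parts.card
  | m + 2, _, _, _, p => HyperPartition.outerBlocks (m + 1) p.2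

/-- `|℘ₙ^(m)|`: the number of `m`-th order partitions of an `n`-element set. -/
noncomputable def hyperBell (m n : ℕ) : ℕ :=
  Nat.card (HyperPartition m (Finset.univ : Finset (Fin n)))

/-- The `m`-th order Stirling number `S^(m)(n,k)`: the number of `m`-th order
partitions of an `n`-element set whose outermost partition has exactly `k` blocks. -/
noncomputable def hyperStirling (m n k : ℕ) : ℕ :=
  Nat.card {p : HyperPartition m (Finset.univ : Finset (Fin n)) //
    HyperPartition.outerBlocks m p = k}

/-- The ordinary Stirling number of the second kind `S(n,k)`: the number of
set partitions of an `n`-element set into exactly `k` blocks. -/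
noncomputable def stirling (n k : ℕ) : ℕ :=
  Nat.card {P : Finpartition (Finset.univ : Finset (Fin n)) // P.parts.card = k}

/-- Composition `f(g(x))` of formal power series (intended for `g` with zero
constant term, in which case `coeff n (g ^ i) = 0` for `i > n`). -/
noncomputable def psComp (f g : PowerSeries ℚ) : PowerSeries ℚ :=
  PowerSeries.mk fun n =>
    PowerSeries.coeff (R := ℚ) n
      (∑ i ∈ Finset.range (n + 1), PowerSeries.C (R := ℚ) (PowerSeries.coeff (R := ℚ) i f) * g ^ i)

/-- The iterated exponential series: `E₀ = exp x`, `E_{m+1} = exp (E_m - 1)`. -/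
noncomputable def E : ℕ → PowerSeries ℚ
  | 0 => PowerSeries.exp ℚ
  | m + 1 => psComp (PowerSeries.exp ℚ) (E m - 1)

/-- The `m`-th order Bell number `Bₙ^(m) = n! · [xⁿ] E_m(x)`. -/
noncomputable def bell (m n : ℕ) : ℚ :=
  (n.factorial : ℚ) * PowerSeries.coeff (R := ℚ) n (E m)



/-!
Peeling off the innermost partition writes an `(m+1)`-th order partition as a set partition of
the ground set together with an `m`-th order partition of its blocks, so
`S^(m+1)(n,k) = ∑ⱼ S(n,j) S^(m)(j,k)`. As `n! [xⁿ] (eˣ - 1)ʲ / j! = S(n,j)`, this is composition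
with `eˣ - 1` of exponential generating functions, and `E_m = E_{m-1} ∘ (eˣ - 1)` then gives
`∑ₙ S^(m)(n,k) xⁿ / n! = (E_{m-1} - 1)ᵏ / k!`. The derivative of the right-hand side is
`(E_{m-1} - 1)ᵏ⁻¹ / (k-1)! · E_{m-1}'`, and comparing the coefficients of `xⁿ⁻¹ / (n-1)!` is the
recurrence. For `m = 1` the same recurrence, proved by removing the block of a fixed point,
identifies `S(n,k)` with the coefficients of `(eˣ - 1)ᵏ / k!`.
-/

open Finset

namespace Finpartition

variable {α β : Type*} [DecidableEq α] [DecidableEq β]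

def finsetMap (f : α ↪ β) {s : Finset α} (P : Finpartition s) : Finpartition (s.map f) where
  parts := P.parts.map (mapEmbedding f).toEmbedding
  supIndep := by
    rw [supIndep_iff_pairwiseDisjoint, coe_map]
    rintro _ ⟨b, hb, rfl⟩ _ ⟨c, hc, rfl⟩ hbc
    exact (disjoint_map f).2 (P.disjoint hb hc (ne_of_apply_ne _ hbc))
  sup_parts := by
    ext y
    simp only [mem_sup, mem_map, RelEmbedding.coe_toEmbedding, mapEmbedding_apply, id,
      exists_exists_and_eq_and]
    constructor
    · rintro ⟨b, hb, a, ha, rfl⟩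
      exact ⟨a, P.le hb ha, rfl⟩
    · rintro ⟨a, ha, rfl⟩
      obtain ⟨b, hb, hab⟩ := P.exists_mem ha
      exact ⟨b, hb, a, hab, rfl⟩
  bot_notMem := by simp

noncomputable def finsetComap (f : α ↪ β) {s : Finset α} (Q : Finpartition (s.map f)) :
    Finpartition s where
  parts := Q.parts.image (preimage · f f.injective.injOn)
  supIndep := by
    rw [supIndep_iff_pairwiseDisjoint, coe_image]
    rintro _ ⟨b, hb, rfl⟩ _ ⟨c, hc, rfl⟩ hbc
    have := Q.disjoint hb hc fun h => hbc (h ▸ rfl)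
    exact disjoint_left.2 fun a hab hac =>
      disjoint_left.1 this (by simpa using hab) (by simpa using hac)
  sup_parts := by
    ext a
    simp only [mem_sup, mem_image, id, exists_exists_and_eq_and, mem_preimage]
    refine ⟨fun ⟨b, hb, hab⟩ => (mem_map' f).1 (Q.le hb hab), fun ha => ?_⟩
    exact Q.exists_mem ((mem_map' f).2 ha)
  bot_notMem := by
    simp only [bot_eq_empty, mem_image, not_exists, not_and]
    intro b hb hempty
    obtain ⟨y, hy⟩ := Q.nonempty_of_mem_parts hb
    obtain ⟨a, -, rfl⟩ := mem_map.1 (Q.le hb hy)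
    have ha : a ∈ b.preimage f f.injective.injOn := mem_preimage.2 hy
    simp [hempty] at ha

noncomputable def finsetMapEquiv (f : α ↪ β) (s : Finset α) :
    Finpartition s ≃ Finpartition (s.map f) where
  toFun := finsetMap f
  invFun := finsetComap f
  left_inv P := by
    ext1
    change (P.parts.map _).image _ = P.parts
    rw [map_eq_image, image_image]
    exact (image_congr fun b _ => preimage_map f b).trans image_id
  right_inv Q := by
    ext1
    change (Q.parts.image _).map _ = Q.parts
    rw [map_eq_image, image_image]
    refine (image_congr fun c hc => ?_).trans image_id
    obtain ⟨u, -, rfl⟩ := subset_map_iff.1 (Q.le hc)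
    simp [preimage_map]

end Finpartition

namespace HyperPartition

instance instFinite : ∀ (m : ℕ) {α : Type} [DecidableEq α] (s : Finset α),
    Finite (HyperPartition m s)
  | 0, _, _, _ => inferInstanceAs (Finite PUnit)
  | m + 1, _, _, s =>
    have := fun P : Finpartition s => instFinite m P.parts
    inferInstanceAs (Finite (Σ P : Finpartition s, HyperPartition m P.parts))

noncomputable def finsetMapEquiv : (m : ℕ) → {α β : Type} → [DecidableEq α] → [DecidableEq β] →
    (f : α ↪ β) → (s : Finset α) → HyperPartition m s ≃ HyperPartition m (s.map f)
  | 0, _, _, _, _, _, _ => Equiv.refl PUnit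
  | m + 1, _, _, _, _, f, s =>
    Equiv.sigmaCongr (Finpartition.finsetMapEquiv f s)
      fun P => finsetMapEquiv m (mapEmbedding f).toEmbedding P.parts

theorem outerBlocks_finsetMapEquiv : ∀ (m : ℕ) {α β : Type} [DecidableEq α] [DecidableEq β]
    (f : α ↪ β) (s : Finset α) (p : HyperPartition m s),
    outerBlocks m (finsetMapEquiv m f s p) = outerBlocks m p
  | 0, _, _, _, _, f, _, _ => card_map f
  | 1, _, _, _, _, _, _, _ => card_map _
  | m + 2, _, _, _, _, _, _, p => outerBlocks_finsetMapEquiv (m + 1) _ _ p.2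

theorem outerBlocks_le_card : ∀ (m : ℕ) {α : Type} [DecidableEq α] {s : Finset α}
    (p : HyperPartition m s), outerBlocks m p ≤ s.card
  | 0, _, _, _, _ => le_rfl
  | 1, _, _, _, p => p.1.card_parts_le_card
  | m + 2, _, _, _, p => (outerBlocks_le_card (m + 1) p.2).trans p.1.card_parts_le_card

end HyperPartition

theorem Finset.map_univ_equivFin_symm {α : Type*} (s : Finset α) :
    (univ : Finset (Fin s.card)).map (s.equivFin.symm.toEmbedding.trans (.subtype _)) = s := by
  rw [← map_map, map_univ_equiv, univ_eq_attach, attach_map_val]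

theorem card_outerBlocks_finsetMap {α β : Type} [DecidableEq α] [DecidableEq β] (m : ℕ)
    (f : α ↪ β) (s : Finset α) (k : ℕ) :
    Nat.card {p : HyperPartition m (s.map f) // HyperPartition.outerBlocks m p = k} =
      Nat.card {p : HyperPartition m s // HyperPartition.outerBlocks m p = k} :=
  Nat.card_congr ((HyperPartition.finsetMapEquiv m f s).subtypeEquiv fun p => by
    rw [HyperPartition.outerBlocks_finsetMapEquiv]).symm

theorem card_outerBlocks_eq_hyperStirling {α : Type} [DecidableEq α] (m : ℕ) (s : Finset α)
    (k : ℕ) :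
    Nat.card {p : HyperPartition m s // HyperPartition.outerBlocks m p = k} =
      hyperStirling m s.card k := by
  conv_lhs => rw [← Finset.map_univ_equivFin_symm s]
  exact card_outerBlocks_finsetMap m _ univ k

theorem hyperStirling_eq_zero_of_lt {m n k : ℕ} (h : n < k) : hyperStirling m n k = 0 := by
  rw [hyperStirling, Nat.card_eq_zero]
  exact .inl ⟨fun ⟨p, hp⟩ => by
    have := HyperPartition.outerBlocks_le_card m p
    simp only [hp, card_univ, Fintype.card_fin] at this
    omega⟩


theorem card_outerBlocks_one_eq {α : Type} [DecidableEq α] (s : Finset α) (k : ℕ) :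
    Nat.card {p : HyperPartition 1 s // HyperPartition.outerBlocks 1 p = k} =
      Nat.card {P : Finpartition s // P.parts.card = k} :=
  Nat.card_congr ((Equiv.sigmaPUnit _).subtypeEquiv fun _ => Iff.rfl)

theorem hyperStirling_one (n k : ℕ) : hyperStirling 1 n k = stirling n k :=
  card_outerBlocks_one_eq _ k

theorem card_parts_eq_stirling {α : Type} [DecidableEq α] (s : Finset α) (k : ℕ) :
    Nat.card {P : Finpartition s // P.parts.card = k} = stirling s.card k := by
  rw [← card_outerBlocks_one_eq, card_outerBlocks_eq_hyperStirling, hyperStirling_one]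

theorem sum_apply_card_parts_eq_sum_stirling {α : Type} [DecidableEq α] (s : Finset α)
    (f : ℕ → ℕ) :
    ∑ P : Finpartition s, f P.parts.card = ∑ j ∈ range (s.card + 1), stirling s.card j * f j := by
  rw [← sum_fiberwise_of_maps_to (g := fun P : Finpartition s => P.parts.card)
    fun P _ => mem_range.2 (Nat.lt_succ_of_le P.card_parts_le_card)]
  refine sum_congr rfl fun j _ => ?_
  rw [sum_congr rfl fun P hP => by rw [(mem_filter.1 hP).2], sum_const, smul_eq_mul,
    ← card_parts_eq_stirling, Nat.card_eq_fintype_card, Fintype.card_subtype]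

theorem hyperStirling_succ {m : ℕ} (hm : m ≠ 0) (n k : ℕ) :
    hyperStirling (m + 1) n k = ∑ j ∈ range (n + 1), stirling n j * hyperStirling m j k := by
  obtain ⟨m, rfl⟩ := Nat.exists_eq_succ_of_ne_zero hm
  let e : {p : HyperPartition (m + 2) (univ : Finset (Fin n)) //
        HyperPartition.outerBlocks (m + 2) p = k} ≃
      Σ P : Finpartition (univ : Finset (Fin n)),
        {q : HyperPartition (m + 1) P.parts // HyperPartition.outerBlocks (m + 1) q = k} :=
    { toFun p := ⟨p.1.1, p.1.2, p.2⟩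
      invFun q := ⟨⟨q.1, q.2.1⟩, q.2.2⟩
      left_inv _ := rfl
      right_inv _ := rfl }
  rw [hyperStirling, Nat.card_congr e, Nat.card_sigma]
  simp only [card_outerBlocks_eq_hyperStirling]
  simpa only [card_univ, Fintype.card_fin] using
    sum_apply_card_parts_eq_sum_stirling (univ : Finset (Fin n)) fun j => hyperStirling (m + 1) j k

namespace Finpartition

variable {α : Type*} [DecidableEq α] {s A : Finset α} {x : α}

theorem sup_erase_part_eq_sdiff (P : Finpartition s) (hx : x ∈ s) :
    (P.parts.erase (P.part x)).sup id = s \ P.part x := by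
  ext a
  simp only [mem_sup, mem_erase, id, mem_sdiff]
  constructor
  · rintro ⟨c, ⟨hcx, hc⟩, hac⟩
    exact ⟨P.le hc hac, fun hax => hcx (P.eq_of_mem_parts hc (P.part_mem.2 hx) hac hax)⟩
  · rintro ⟨has, hax⟩
    obtain ⟨c, hc, hac⟩ := P.exists_mem has
    exact ⟨c, ⟨fun h => hax (h ▸ hac), hc⟩, hac⟩

def sdiffPartEquiv (hA : A ⊆ s) (hx : x ∈ s \ A) (k : ℕ) :
    {P : Finpartition s // P.parts.card = k + 1 ∧ s \ P.part x = A} ≃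
      {Q : Finpartition A // Q.parts.card = k} where
  toFun P := ⟨P.1.ofSubset (erase_subset _ _)
      ((P.1.sup_erase_part_eq_sdiff (mem_sdiff.1 hx).1).trans P.2.2), by
    simp [card_erase_of_mem (P.1.part_mem.2 (mem_sdiff.1 hx).1), P.2.1]⟩
  invFun Q :=
    let P := Q.1.extend (ne_empty_of_mem hx) disjoint_sdiff (union_sdiff_of_subset hA)
    ⟨P, by rw [card_extend, Q.2], by
      rw [P.part_eq_of_mem (mem_insert_self _ _) hx, Finset.sdiff_sdiff_eq_self hA]⟩
  left_inv := by
    rintro ⟨P, -, rfl⟩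
    ext1; ext1
    change insert (s \ (s \ P.part x)) (P.parts.erase (P.part x)) = P.parts
    rw [Finset.sdiff_sdiff_eq_self (P.part_subset x),
      insert_erase (P.part_mem.2 (mem_sdiff.1 hx).1)]
  right_inv Q := by
    ext1; ext1
    change (insert (s \ A) Q.1.parts).erase (Finpartition.part _ x) = Q.1.parts
    rw [part_eq_of_mem _ (mem_insert_self _ _) hx,
      erase_insert fun h => (mem_sdiff.1 hx).2 (Q.1.le h hx)]

end Finpartition

theorem card_parts_succ_eq_sum {α : Type} [DecidableEq α] {s : Finset α} {x : α} (hx : x ∈ s)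
    (k : ℕ) :
    Nat.card {P : Finpartition s // P.parts.card = k + 1} =
      ∑ A ∈ (s.erase x).powerset, stirling A.card k := by
  rw [Nat.card_eq_fintype_card, Fintype.card_subtype,
    card_eq_sum_card_fiberwise (f := fun P => s \ P.part x) (t := (s.erase x).powerset)
      fun P _ => mem_powerset.2 fun a ha => mem_erase.2
        ⟨by rintro rfl; exact (mem_sdiff.1 ha).2 (P.mem_part_self.2 hx), (mem_sdiff.1 ha).1⟩]
  refine sum_congr rfl fun A hA => ?_
  have hA' := mem_powerset.1 hA
  rw [filter_filter, ← Fintype.card_subtype, ← Nat.card_eq_fintype_card,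
    Nat.card_congr (Finpartition.sdiffPartEquiv (hA'.trans (erase_subset x s))
      (mem_sdiff.2 ⟨hx, fun h => notMem_erase x s (hA' h)⟩) k), card_parts_eq_stirling]

theorem stirling_succ_succ (n k : ℕ) :
    stirling (n + 1) (k + 1) = ∑ j ∈ range (n + 1), n.choose j * stirling j k := by
  rw [stirling, card_parts_succ_eq_sum (mem_univ 0), sum_powerset_apply_card (fun j => stirling j k)]
  simp only [mem_univ, card_erase_of_mem, card_univ, Fintype.card_fin, add_tsub_cancel_right,
    smul_eq_mul]

theorem stirling_zero_right (n : ℕ) : stirling n 0 = if n = 0 then 1 else 0 := by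
  have parts_eq {P : Finpartition (univ : Finset (Fin n))} (hP : P.parts.card = 0) :
      P.parts = ∅ := card_eq_zero.1 hP
  split_ifs with hn
  · subst hn
    rw [stirling, Nat.card_eq_one_iff_unique]
    exact ⟨⟨fun P Q => Subtype.ext (Finpartition.ext ((parts_eq P.2).trans (parts_eq Q.2).symm))⟩,
      ⟨⟨⊥, by simp⟩⟩⟩
  · rw [stirling, Nat.card_eq_zero]
    exact .inl ⟨fun ⟨P, hP⟩ => by
      have := Finpartition.parts_eq_empty_iff.1 (parts_eq hP)
      rw [bot_eq_empty, univ_eq_empty_iff] at this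
      exact this.false ⟨0, Nat.pos_of_ne_zero hn⟩⟩

open PowerSeries
open scoped Nat

noncomputable def egfCoeff (n : ℕ) (f : ℚ⟦X⟧) : ℚ := n ! * coeff n f

/-- `(G - 1) ^ k / k!`: the exponential generating function of partitions into `k` blocks,
each block carrying a structure counted by `G`. -/
noncomputable def blockSeries (G : ℚ⟦X⟧) (k : ℕ) : ℚ⟦X⟧ := (k ! : ℚ)⁻¹ • (G - 1) ^ k

theorem egfCoeff_mul (f g : ℚ⟦X⟧) (n : ℕ) :
    egfCoeff n (f * g) =
      ∑ j ∈ range (n + 1), n.choose j * egfCoeff j f * egfCoeff (n - j) g := by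
  rw [egfCoeff, coeff_mul, Finset.Nat.sum_antidiagonal_eq_sum_range_succ_mk, mul_sum]
  refine sum_congr rfl fun j hj => ?_
  have := Nat.choose_mul_factorial_mul_factorial (Nat.lt_succ_iff.1 (mem_range.1 hj))
  rw [egfCoeff, egfCoeff, ← this]
  push_cast
  ring

theorem egfCoeff_derivative (f : ℚ⟦X⟧) (n : ℕ) :
    egfCoeff n (d⁄dX ℚ f) = egfCoeff (n + 1) f := by
  rw [egfCoeff, egfCoeff, coeff_derivative, Nat.factorial_succ]
  push_cast
  ring

theorem egfCoeff_exp (n : ℕ) : egfCoeff n (exp ℚ) = 1 := by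
  simp [egfCoeff, coeff_exp, Nat.factorial_ne_zero]

theorem derivative_blockSeries (G : ℚ⟦X⟧) (k : ℕ) :
    d⁄dX ℚ (blockSeries G (k + 1)) = blockSeries G k * d⁄dX ℚ G := by
  rw [blockSeries, blockSeries, Derivation.map_smul, derivative_pow, map_sub, derivative_one,
    sub_zero, add_tsub_cancel_right, mul_assoc, ← nsmul_eq_mul, ← Nat.cast_smul_eq_nsmul ℚ,
    smul_smul, smul_mul_assoc, Nat.factorial_succ]
  congr 1
  push_cast
  field_simp

theorem egfCoeff_blockSeries_succ (G : ℚ⟦X⟧) (n k : ℕ) :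
    egfCoeff (n + 1) (blockSeries G (k + 1)) =
      ∑ j ∈ range (n + 1), n.choose j * egfCoeff (n + 1 - j) G * egfCoeff j (blockSeries G k) := by
  rw [← egfCoeff_derivative, derivative_blockSeries, egfCoeff_mul]
  refine sum_congr rfl fun j hj => ?_
  rw [egfCoeff_derivative, Nat.sub_add_comm (Nat.lt_succ_iff.1 (mem_range.1 hj))]
  ring

theorem PowerSeries.coeff_pow_eq_zero_of_lt {R : Type*} [CommSemiring R] {g : R⟦X⟧}
    (hg : constantCoeff g = 0) {n j : ℕ} (h : n < j) : coeff n (g ^ j) = 0 :=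
  X_pow_dvd_iff.1 (pow_dvd_pow_of_dvd (X_dvd_iff.2 hg) j) n h

theorem PowerSeries.coeff_subst_eq_sum {R : Type*} [CommRing R] {g : R⟦X⟧}
    (hg : constantCoeff g = 0) (f : R⟦X⟧) (n : ℕ) :
    coeff n (f.subst g) = ∑ j ∈ range (n + 1), coeff j f * coeff n (g ^ j) := by
  rw [coeff_subst' (HasSubst.of_constantCoeff_zero' hg), finsum_eq_sum_of_support_subset]
  · rfl
  · intro j hj
    rw [mem_coe, mem_range]
    by_contra h
    exact hj (by simp [coeff_pow_eq_zero_of_lt hg (by omega : n < j)])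

theorem PowerSeries.subst_one {R S : Type*} [CommRing R] [CommRing S] [Algebra R S]
    {a : S⟦X⟧} (ha : HasSubst a) : (1 : R⟦X⟧).subst a = 1 := by
  rw [← coe_substAlgHom ha, map_one]

theorem psComp_eq_subst {g : ℚ⟦X⟧} (hg : constantCoeff g = 0) (f : ℚ⟦X⟧) :
    psComp f g = f.subst g := by
  ext n
  simp [psComp, coeff_subst_eq_sum hg]

theorem constantCoeff_E (m : ℕ) : constantCoeff (E m) = 1 := by
  cases m <;> simp [E, psComp, coeff_exp]

theorem hasSubst_exp_sub_one : HasSubst (exp ℚ - 1) :=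
  HasSubst.of_constantCoeff_zero' (by simp)

theorem E_succ_eq_subst (m : ℕ) : E (m + 1) = (E m).subst (exp ℚ - 1) := by
  have constantCoeff_E_sub_one (m : ℕ) : constantCoeff (E m - 1) = 0 := by
    simp [constantCoeff_E]
  have E_succ (m : ℕ) : E (m + 1) = (exp ℚ).subst (E m - 1) :=
    psComp_eq_subst (constantCoeff_E_sub_one m) _
  induction m with
  | zero => exact E_succ 0
  | succ m ih =>
    calc E (m + 2) = (exp ℚ).subst ((E m).subst (exp ℚ - 1) - 1) := by rw [E_succ, ih]
      _ = (exp ℚ).subst ((E m - 1).subst (exp ℚ - 1)) := by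
        rw [subst_sub hasSubst_exp_sub_one, subst_one hasSubst_exp_sub_one]
      _ = subst (exp ℚ - 1) ((exp ℚ).subst (E m - 1)) := by
        rw [subst_comp_subst_apply (.of_constantCoeff_zero' (constantCoeff_E_sub_one m))
          hasSubst_exp_sub_one]
      _ = (E (m + 1)).subst (exp ℚ - 1) := by rw [← E_succ]

theorem blockSeries_E_succ (m k : ℕ) :
    blockSeries (E (m + 1)) k = (blockSeries (E m) k).subst (exp ℚ - 1) := by
  rw [blockSeries, blockSeries, subst_smul hasSubst_exp_sub_one, subst_pow hasSubst_exp_sub_one,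
    subst_sub hasSubst_exp_sub_one, subst_one hasSubst_exp_sub_one, E_succ_eq_subst]

theorem egfCoeff_subst_exp_sub_one (f : ℚ⟦X⟧) (n : ℕ) :
    egfCoeff n (f.subst (exp ℚ - 1)) =
      ∑ j ∈ range (n + 1), egfCoeff j f * egfCoeff n (blockSeries (exp ℚ) j) := by
  rw [egfCoeff, coeff_subst_eq_sum (by simp), mul_sum]
  refine sum_congr rfl fun j _ => ?_
  rw [egfCoeff, egfCoeff, blockSeries, coeff_smul, smul_eq_mul]
  field_simp

theorem stirling_eq_egfCoeff (n k : ℕ) :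
    (stirling n k : ℚ) = egfCoeff n (blockSeries (exp ℚ) k) := by
  induction k generalizing n with
  | zero =>
    rw [stirling_zero_right]
    split_ifs with hn <;> simp [blockSeries, egfCoeff, coeff_one, hn]
  | succ k ih =>
    cases n with
    | zero =>
      rw [← hyperStirling_one, hyperStirling_eq_zero_of_lt (Nat.succ_pos k)]
      simp [blockSeries, egfCoeff]
    | succ n =>
      rw [stirling_succ_succ, egfCoeff_blockSeries_succ]
      push_cast
      exact sum_congr rfl fun j _ => by rw [egfCoeff_exp, ih, mul_one]

theorem hyperStirling_eq_egfCoeff (m n k : ℕ) :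
    (hyperStirling (m + 1) n k : ℚ) = egfCoeff n (blockSeries (E m) k) := by
  induction m generalizing n with
  | zero => rw [hyperStirling_one, stirling_eq_egfCoeff, E]
  | succ m ih =>
    rw [hyperStirling_succ m.succ_ne_zero, blockSeries_E_succ, egfCoeff_subst_exp_sub_one]
    push_cast
    exact sum_congr rfl fun j _ => by rw [ih, stirling_eq_egfCoeff, mul_comm]

theorem bell_eq_egfCoeff (m n : ℕ) : bell m n = egfCoeff n (E m) := rfl

/-- `S^(m)(n,k) = Σ_{s=k−1}^{n−1} C(n−1,s) · B_{n−s}^(m−1) · S^(m)(s,k−1)`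
for `m ≥ 1`, `n ≥ k ≥ 1` (the conventions `S^(m)(0,0) = 1` and `B_j^(0) = 1` hold by
definition of `hyperStirling` and `bell`). -/
theorem stmt10 (m n k : ℕ) (hm : 1 ≤ m) (hk : 1 ≤ k) (hkn : k ≤ n) :
    (hyperStirling m n k : ℚ) =
      ∑ s ∈ Finset.Icc (k - 1) (n - 1),
        ((n - 1).choose s : ℚ) * bell (m - 1) (n - s) * (hyperStirling m s (k - 1) : ℚ) := by
  obtain ⟨m, rfl⟩ := Nat.exists_eq_add_of_le' hm
  obtain ⟨k, rfl⟩ := Nat.exists_eq_add_of_le' hk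
  obtain ⟨n, rfl⟩ := Nat.exists_eq_add_of_le' (hk.trans hkn)
  simp only [Nat.add_sub_cancel]
  rw [hyperStirling_eq_egfCoeff, egfCoeff_blockSeries_succ]
  simp_rw [← hyperStirling_eq_egfCoeff, bell_eq_egfCoeff]
  refine (sum_subset (fun s hs => ?_) fun s hs hs' => ?_).symm
  · simp only [mem_Icc, mem_range] at hs ⊢
    omega
  · have hsk : s < k := by
      simp only [mem_Icc, mem_range, not_and, not_le] at hs hs'
      omega
    rw [hyperStirling_eq_zero_of_lt hsk, Nat.cast_zero, mul_zero]
end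

section
/- For every fixed n ≥ 2 and every fixed k with 2 ≤ k ≤ n, the m-th order Stirling number S^(m)(n,k) is negligible compared with B_n^(m) as m → ∞; that is, lim_{m→∞} S^(m)(n,k) / B_n^(m) = 0. -/
/-!
If the outermost partition of an `m`-th order partition of an `n`-set has `k ≥ 2` blocks, the
number of blocks drops at most `n - 2` times along the chain, and at every other level the
partition is the discrete one. Choosing the levels where it drops and the partitions there gives
`S^(m)(n,k) = O(m^(n-2))`. On the other side, coefficientwise
`E_{m+1} = exp (E_m - 1) ≥ (E_m - 1) + (E_m - 1)² / 2`, and keeping the term `x · x^(n-1)` of the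
square gives `[xⁿ] E_{m+1} ≥ [xⁿ] E_m + [x^(n-1)] E_m / 2`. Hence `[xⁿ] E_m ≥ C(m, n-1) / 2^(n-1)`,
so `B_n^(m)` grows at least like `m^(n-1)`.
-/

open Finset Filter Topology

theorem pow_succ_add_pow_le (a d : ℕ) : a ^ (d + 1) + a ^ d ≤ (a + 1) ^ (d + 1) :=
  calc a ^ (d + 1) + a ^ d = (a + 1) * a ^ d := by ring
    _ ≤ (a + 1) * (a + 1) ^ d := Nat.mul_le_mul_left _ (Nat.pow_le_pow_left a.le_succ d)
    _ = (a + 1) ^ (d + 1) := (pow_succ' _ _).symm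

theorem two_pow_two_pow_pow_mono : Monotone fun N : ℕ => (2 ^ 2 ^ N) ^ N := fun a b h =>
  calc (2 ^ 2 ^ a) ^ a ≤ (2 ^ 2 ^ b) ^ a :=
        Nat.pow_le_pow_left (Nat.pow_le_pow_right two_pos (Nat.pow_le_pow_right two_pos h)) a
    _ ≤ (2 ^ 2 ^ b) ^ b := Nat.pow_le_pow_right (by positivity) h

theorem two_pow_two_pow_mul_le (M : ℕ) :
    2 ^ 2 ^ (M + 1) * (2 ^ 2 ^ M) ^ M ≤ (2 ^ 2 ^ (M + 1)) ^ (M + 1) := by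
  rw [pow_succ' (2 ^ 2 ^ (M + 1)) M]
  exact Nat.mul_le_mul_left _
    (Nat.pow_le_pow_left (Nat.pow_le_pow_right two_pos (Nat.pow_le_pow_right two_pos M.le_succ)) M)

theorem succ_pow_le_two_pow_mul_descFactorial {m d : ℕ} (h : 2 * d ≤ m + 1) :
    (m + 1) ^ d ≤ 2 ^ d * m.descFactorial d :=
  calc (m + 1) ^ d ≤ (2 * (m + 1 - d)) ^ d := Nat.pow_le_pow_left (by omega) d
    _ = 2 ^ d * (m + 1 - d) ^ d := mul_pow ..
    _ ≤ 2 ^ d * m.descFactorial d := Nat.mul_le_mul_left _ (m.pow_sub_le_descFactorial d)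

namespace Finpartition

variable {α : Type} [DecidableEq α]

theorem eq_bot_of_card_parts_eq {s : Finset α} (P : Finpartition s) (h : #P.parts = #s) :
    P = ⊥ := by
  have hone : ∀ t ∈ P.parts, #t = 1 := by
    refine fun t ht => ((sum_eq_sum_iff_of_le (f := fun _ => 1) fun u hu => ?_).mp ?_ t ht).symm
    · exact card_pos.mpr (P.nonempty_of_mem_parts hu)
    · rw [P.sum_card_parts, ← h, card_eq_sum_ones]
  refine le_bot_iff.mp fun t ht => ?_
  obtain ⟨a, rfl⟩ := card_eq_one.mp (hone t ht)
  exact ⟨{a}, mem_bot_iff.mpr ⟨a, P.le ht (mem_singleton_self a), rfl⟩, le_rfl⟩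

theorem card_parts_lt_card {s : Finset α} {P : Finpartition s} (hP : P ≠ ⊥) : #P.parts < #s :=
  P.card_parts_le_card.lt_of_ne fun h => hP (P.eq_bot_of_card_parts_eq h)

theorem card_le (s : Finset α) : Fintype.card (Finpartition s) ≤ 2 ^ 2 ^ #s := by
  rw [← card_powerset, ← card_powerset, ← card_univ]
  refine card_le_card_of_injOn parts (fun P _ => ?_) fun P _ Q _ h => Finpartition.ext h
  exact mem_powerset.mpr fun t ht => mem_powerset.mpr (P.le ht)

end Finpartition

namespace HyperPartition

variable {α : Type} [DecidableEq α]

instance finite (m : ℕ) (s : Finset α) : Finite (HyperPartition m s) := by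
  induction m generalizing α with
  | zero => exact inferInstanceAs (Finite PUnit)
  | succ m ih => exact inferInstanceAs (Finite ((P : Finpartition s) × HyperPartition m P.parts))

theorem outerBlocks_succ {m : ℕ} {s : Finset α} (P : Finpartition s)
    (q : HyperPartition m P.parts) :
    outerBlocks (m + 1) (⟨P, q⟩ : HyperPartition (m + 1) s) = outerBlocks m q := by
  cases m <;> rfl

theorem outerBlocks_le (m : ℕ) {s : Finset α} (p : HyperPartition m s) :
    outerBlocks m p ≤ #s := by
  induction m generalizing α with
  | zero => exact le_rfl
  | succ m ih =>
    obtain ⟨P, q⟩ := p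
    rw [outerBlocks_succ]
    exact (ih q).trans P.card_parts_le_card

theorem card_outerBlocks_eq_succ (m : ℕ) (s : Finset α) (k : ℕ) :
    Nat.card {p : HyperPartition (m + 1) s // outerBlocks (m + 1) p = k} =
      ∑ P : Finpartition s, Nat.card {q : HyperPartition m P.parts // outerBlocks m q = k} := by
  rw [← Nat.card_sigma]
  exact Nat.card_congr
    { toFun := fun ⟨⟨P, q⟩, h⟩ => ⟨P, q, (outerBlocks_succ P q).symm.trans h⟩
      invFun := fun ⟨P, q, h⟩ => ⟨⟨P, q⟩, (outerBlocks_succ P q).trans h⟩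
      left_inv := fun _ => rfl
      right_inv := fun _ => rfl }

theorem card_outerBlocks_eq_of_card_lt (m : ℕ) {s : Finset α} {k : ℕ} (h : #s < k) :
    Nat.card {p : HyperPartition m s // outerBlocks m p = k} = 0 := by
  rw [Nat.card_eq_zero]
  exact Or.inl ⟨fun ⟨p, hp⟩ => (outerBlocks_le m p).not_gt (hp ▸ h)⟩

theorem card_outerBlocks_eq_le (m : ℕ) (s : Finset α) (k : ℕ) :
    Nat.card {p : HyperPartition m s // outerBlocks m p = k} ≤
      (2 ^ 2 ^ #s) ^ #s * (m + 1) ^ (#s - k) := by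
  induction m generalizing α with
  | zero =>
    calc Nat.card {p : HyperPartition 0 s // outerBlocks 0 p = k}
        ≤ Nat.card (HyperPartition 0 s) := Finite.card_subtype_le _
      _ = 1 := Nat.card_unique (α := PUnit)
      _ ≤ _ := by rw [zero_add, one_pow, mul_one]; exact Nat.one_le_pow _ _ (by positivity)
  | succ m ih =>
    -- Split off the discrete partition `⊥`; every other partition of `s` has fewer blocks.
    rw [card_outerBlocks_eq_succ, ← add_sum_erase _ _ (mem_univ ⊥)]
    have hbot := ih (⊥ : Finpartition s).parts
    rw [Finpartition.card_bot] at hbot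
    rcases le_or_gt #s k with hsk | hks
    · have hrest : ∑ P ∈ univ.erase ⊥,
          Nat.card {q : HyperPartition m (Finpartition.parts P) // outerBlocks m q = k} = 0 :=
        sum_eq_zero fun P hP => card_outerBlocks_eq_of_card_lt m
          ((Finpartition.card_parts_lt_card (ne_of_mem_erase hP)).trans_le hsk)
      rw [hrest, add_zero, Nat.sub_eq_zero_of_le hsk, pow_zero]
      rwa [Nat.sub_eq_zero_of_le hsk, pow_zero] at hbot
    · obtain ⟨M, hM⟩ : ∃ M, #s = M + 1 := ⟨#s - 1, by omega⟩
      have hd : #s - k = M - k + 1 := by omega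
      rw [hd, hM] at hbot ⊢
      have hP : ∀ P ∈ univ.erase (⊥ : Finpartition s),
          Nat.card {q : HyperPartition m P.parts // outerBlocks m q = k} ≤
            (2 ^ 2 ^ M) ^ M * (m + 1) ^ (M - k) := by
        intro P hP
        have hlt := Finpartition.card_parts_lt_card (ne_of_mem_erase hP)
        exact (ih P.parts).trans (Nat.mul_le_mul (two_pow_two_pow_pow_mono (by omega))
          (Nat.pow_le_pow_right m.succ_pos (by omega)))
      have hcount : #(univ.erase (⊥ : Finpartition s)) ≤ 2 ^ 2 ^ (M + 1) :=
        hM ▸ (card_erase_le.trans_eq card_univ).trans (Finpartition.card_le s)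
      calc _ ≤ (2 ^ 2 ^ (M + 1)) ^ (M + 1) * (m + 1) ^ (M - k + 1) +
            2 ^ 2 ^ (M + 1) * ((2 ^ 2 ^ M) ^ M * (m + 1) ^ (M - k)) :=
          add_le_add hbot ((sum_le_card_nsmul _ _ _ hP).trans (Nat.mul_le_mul_right _ hcount))
        _ ≤ (2 ^ 2 ^ (M + 1)) ^ (M + 1) * ((m + 1) ^ (M - k + 1) + (m + 1) ^ (M - k)) := by
          rw [mul_add, ← mul_assoc]
          exact add_le_add_right (Nat.mul_le_mul_right _ (two_pow_two_pow_mul_le M)) _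
        _ ≤ _ := Nat.mul_le_mul_left _ (pow_succ_add_pow_le _ _)

end HyperPartition

theorem hyperStirling_mul_succ_le (m n : ℕ) {k : ℕ} (hk : 2 ≤ k) :
    hyperStirling m n k * (m + 1) ≤ (2 ^ 2 ^ n) ^ n * (m + 1) ^ (n - 1) := by
  rcases lt_or_ge n k with hnk | hkn
  · rw [hyperStirling, HyperPartition.card_outerBlocks_eq_of_card_lt m (by simpa using hnk),
      zero_mul]
    exact Nat.zero_le _
  · have h := HyperPartition.card_outerBlocks_eq_le m (univ : Finset (Fin n)) k
    rw [card_univ, Fintype.card_fin] at h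
    calc hyperStirling m n k * (m + 1) ≤ (2 ^ 2 ^ n) ^ n * (m + 1) ^ (n - k) * (m + 1) :=
          Nat.mul_le_mul_right _ h
      _ ≤ (2 ^ 2 ^ n) ^ n * (m + 1) ^ (n - 2) * (m + 1) := by gcongr; omega
      _ = (2 ^ 2 ^ n) ^ n * (m + 1) ^ (n - 1) := by
        rw [mul_assoc, ← pow_succ, show n - 2 + 1 = n - 1 by omega]

namespace PowerSeries

section Nonneg

variable {R : Type*} [CommSemiring R] [PartialOrder R] [IsOrderedRing R] {f g : PowerSeries R}

theorem coeff_mul_le_coeff_mul (hf : ∀ j, 0 ≤ coeff j f) (hg : ∀ j, 0 ≤ coeff j g) {a b : ℕ} :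
    coeff a f * coeff b g ≤ coeff (a + b) (f * g) := by
  rw [coeff_mul]
  exact single_le_sum (f := fun p : ℕ × ℕ => coeff p.1 f * coeff p.2 g)
    (fun p _ => mul_nonneg (hf _) (hg _))
    (mem_antidiagonal.mpr (rfl : (a, b).1 + (a, b).2 = a + b))

theorem coeff_mul_nonneg (hf : ∀ j, 0 ≤ coeff j f) (hg : ∀ j, 0 ≤ coeff j g) (n : ℕ) :
    0 ≤ coeff n (f * g) := by
  rw [coeff_mul]
  exact sum_nonneg fun p _ => mul_nonneg (hf _) (hg _)

theorem coeff_pow_nonneg (hg : ∀ j, 0 ≤ coeff j g) (i n : ℕ) : 0 ≤ coeff n (g ^ i) := by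
  induction i generalizing n with
  | zero => rw [pow_zero, coeff_one]; split_ifs <;> simp
  | succ i ih => rw [pow_succ]; exact coeff_mul_nonneg ih hg n

end Nonneg

theorem coeff_sub_one_nonneg {f : PowerSeries ℚ} (h0 : coeff 0 f = 1)
    (hf : ∀ j, 0 ≤ coeff j f) (j : ℕ) : 0 ≤ coeff j (f - 1) := by
  rcases eq_or_ne j 0 with rfl | hj
  · rw [map_sub, h0, coeff_one, if_pos rfl, sub_self]
  · simpa [coeff_one, hj] using hf j

theorem coeff_psComp (f g : PowerSeries ℚ) (n : ℕ) :
    coeff n (psComp f g) = ∑ i ∈ range (n + 1), coeff i f * coeff n (g ^ i) := by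
  simp [psComp, coeff_mk, map_sum, coeff_C_mul]

theorem coeff_psComp_exp (g : PowerSeries ℚ) (n : ℕ) :
    coeff n (psComp (exp ℚ) g) = ∑ i ∈ range (n + 1), (i.factorial : ℚ)⁻¹ * coeff n (g ^ i) := by
  simp [coeff_psComp, coeff_exp]

theorem coeff_zero_psComp_exp (g : PowerSeries ℚ) : coeff 0 (psComp (exp ℚ) g) = 1 := by
  simp [coeff_psComp_exp]

theorem coeff_psComp_exp_nonneg {g : PowerSeries ℚ} (hg : ∀ j, 0 ≤ coeff j g) (n : ℕ) :
    0 ≤ coeff n (psComp (exp ℚ) g) := by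
  rw [coeff_psComp_exp]
  exact sum_nonneg fun i _ => mul_nonneg (by positivity) (coeff_pow_nonneg hg i n)

theorem coeff_add_coeff_sq_le_coeff_psComp_exp {g : PowerSeries ℚ} (hg : ∀ j, 0 ≤ coeff j g)
    {n : ℕ} (hn : 2 ≤ n) :
    coeff n g + coeff n (g ^ 2) / 2 ≤ coeff n (psComp (exp ℚ) g) := by
  rw [coeff_psComp_exp]
  have hsub : ({1, 2} : Finset ℕ) ⊆ range (n + 1) := by
    intro i hi
    simp only [mem_insert, mem_singleton] at hi
    simp only [mem_range]
    omega
  refine le_of_eq_of_le ?_ (sum_le_sum_of_subset_of_nonneg hsub fun i _ _ =>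
    mul_nonneg (by positivity) (coeff_pow_nonneg hg i n))
  rw [sum_pair (by norm_num)]
  norm_num [Nat.factorial]
  ring

end PowerSeries

open PowerSeries

theorem E_succ (m : ℕ) : E (m + 1) = psComp (exp ℚ) (E m - 1) := rfl

theorem coeff_zero_E (m : ℕ) : coeff 0 (E m) = 1 := by
  cases m with
  | zero => simp [E]
  | succ m => exact coeff_zero_psComp_exp _

theorem coeff_E_nonneg (m j : ℕ) : 0 ≤ coeff j (E m) := by
  induction m generalizing j with
  | zero => simp only [E, coeff_exp]; positivity
  | succ m ih => exact coeff_psComp_exp_nonneg (coeff_sub_one_nonneg (coeff_zero_E m) ih) j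

theorem coeff_one_E (m : ℕ) : coeff 1 (E m) = 1 := by
  induction m with
  | zero => simp [E]
  | succ m ih => simp [E_succ, coeff_psComp_exp, sum_range_succ, coeff_one, ih]

theorem coeff_E_add_coeff_E_div_two_le (m j : ℕ) :
    coeff (j + 2) (E m) + coeff (j + 1) (E m) / 2 ≤ coeff (j + 2) (E (m + 1)) := by
  have hg := coeff_sub_one_nonneg (coeff_zero_E m) (coeff_E_nonneg m)
  have hsq : coeff (j + 1) (E m) ≤ coeff (j + 2) ((E m - 1) ^ 2) := by
    have := coeff_mul_le_coeff_mul hg hg (a := 1) (b := j + 1)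
    rwa [map_sub, map_sub, coeff_one_E, coeff_one, coeff_one, if_neg one_ne_zero,
      if_neg j.succ_ne_zero, sub_zero, sub_zero, one_mul, add_comm 1, ← sq] at this
  have hlin : coeff (j + 2) (E m - 1) = coeff (j + 2) (E m) := by simp [coeff_one]
  have := coeff_add_coeff_sq_le_coeff_psComp_exp hg (n := j + 2) (by omega)
  rw [E_succ]
  linarith

theorem choose_div_two_pow_le_coeff_E (m n : ℕ) :
    (m.choose (n - 1) : ℚ) / 2 ^ (n - 1) ≤ coeff n (E m) := by
  induction m generalizing n with
  | zero =>
    match n with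
    | 0 => simp [coeff_zero_E]
    | 1 => simp [coeff_one_E]
    | j + 2 => simpa using coeff_E_nonneg 0 (j + 2)
  | succ m ih =>
    match n with
    | 0 => simp [coeff_zero_E]
    | 1 => simp [coeff_one_E]
    | j + 2 =>
      have h1 := ih (j + 1)
      have h2 := ih (j + 2)
      rw [show j + 2 - 1 = j + 1 by omega] at h2 ⊢
      rw [Nat.add_sub_cancel] at h1
      have hhalf : (m.choose j : ℚ) / 2 ^ (j + 1) = (m.choose j : ℚ) / 2 ^ j / 2 := by
        rw [pow_succ, div_div]
      rw [Nat.choose_succ_succ', Nat.cast_add, add_div, hhalf]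
      linarith [coeff_E_add_coeff_E_div_two_le m j]

theorem bell_nonneg (m n : ℕ) : 0 ≤ bell m n :=
  mul_nonneg (Nat.cast_nonneg _) (coeff_E_nonneg m n)

theorem succ_pow_le_four_pow_mul_bell {m n : ℕ} (h : 2 * n ≤ m + 1) :
    ((m : ℚ) + 1) ^ (n - 1) ≤ 4 ^ (n - 1) * bell m n := by
  have hdesc : (m + 1) ^ (n - 1) ≤ 2 ^ (n - 1) * ((n - 1).factorial * m.choose (n - 1)) := by
    rw [← Nat.descFactorial_eq_factorial_mul_choose]
    exact succ_pow_le_two_pow_mul_descFactorial (by omega)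
  have hfac : ((n - 1).factorial : ℚ) ≤ n.factorial := by
    exact_mod_cast Nat.factorial_le (n.sub_le 1)
  have hcoeff := choose_div_two_pow_le_coeff_E m n
  rw [div_le_iff₀ (by positivity)] at hcoeff
  calc ((m : ℚ) + 1) ^ (n - 1) ≤ 2 ^ (n - 1) * ((n - 1).factorial * m.choose (n - 1)) := by
        exact_mod_cast hdesc
    _ ≤ 2 ^ (n - 1) * (n.factorial * (coeff n (E m) * 2 ^ (n - 1))) := by gcongr
    _ = 4 ^ (n - 1) * bell m n := by
        rw [bell, show (4 : ℚ) = 2 * 2 by norm_num, mul_pow]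
        ring

theorem stmt17_general (n k : ℕ) (hk : 2 ≤ k) :
    Filter.Tendsto (fun m : ℕ => (hyperStirling m n k : ℚ) / bell m n)
      Filter.atTop (nhds 0) := by
  set D : ℚ := (2 ^ 2 ^ n) ^ n * 4 ^ (n - 1)
  have hD : Tendsto (fun m : ℕ => D / ((m : ℚ) + 1)) atTop (𝓝 0) :=
    tendsto_const_nhds.div_atTop (tendsto_atTop_add_const_right _ 1 tendsto_natCast_atTop_atTop)
  refine tendsto_of_tendsto_of_tendsto_of_le_of_le' tendsto_const_nhds hD
    (Eventually.of_forall fun m => div_nonneg (Nat.cast_nonneg _) (bell_nonneg m n)) ?_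
  filter_upwards [eventually_ge_atTop (2 * n)] with m hm
  have hbell := succ_pow_le_four_pow_mul_bell (m := m) (n := n) (by omega)
  have hpos : 0 < bell m n :=
    pos_of_mul_pos_right (hbell.trans_lt' (by positivity)) (by positivity)
  have hS : (hyperStirling m n k : ℚ) * ((m : ℚ) + 1) ≤
      (2 ^ 2 ^ n) ^ n * ((m : ℚ) + 1) ^ (n - 1) := by
    exact_mod_cast hyperStirling_mul_succ_le m n hk
  rw [div_le_div_iff₀ hpos (by positivity)]
  calc (hyperStirling m n k : ℚ) * ((m : ℚ) + 1)
      ≤ (2 ^ 2 ^ n) ^ n * ((m : ℚ) + 1) ^ (n - 1) := hS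
    _ ≤ (2 ^ 2 ^ n) ^ n * (4 ^ (n - 1) * bell m n) := by gcongr
    _ = D * bell m n := by ring

/-- for fixed `n ≥ 2` and `2 ≤ k ≤ n`, `lim_{m→∞} S^(m)(n,k) / Bₙ^(m) = 0`. -/
theorem stmt17 (n k : ℕ) (hn : 2 ≤ n) (hk : 2 ≤ k) (hkn : k ≤ n) :
    Filter.Tendsto (fun m : ℕ => (hyperStirling m n k : ℚ) / bell m n)
      Filter.atTop (nhds 0) :=
  stmt17_general n k hk
end
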